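/- arXiv:2604.20433 — 10 statements merged into one kernel-verified Lean document; each statement's English description precedes it below -/
import Mathlib

section
/- For every reward R ∈ ℝ^m, the ℓ-orbit {R + BΔ : Δ ∈ ℝ^n} of R contains exactly one normal reward. Explicitly, the reward R + B·V*_R is normal, and if R + BΔ is normal for some Δ ∈ ℝ^n then Δ = V*_R. -/
open Matrix MeasureTheory Filter Topology

noncomputable section

/-- The policy matrix `Π` of a deterministic policy `π`. -/
def polMat {n m : ℕ} (π : Fin n → Fin m) : Matrix (Fin n) (Fin m) ℝ :=
  Matrix.of fun i j => if j = π i then 1 else 0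

/-- The matrix `S` with `S^j_i = 1` iff `s j = i`. -/
def projMat {n m : ℕ} (s : Fin m → Fin n) : Matrix (Fin m) (Fin n) ℝ :=
  Matrix.of fun j i => if s j = i then 1 else 0

/-- A row-stochastic matrix: nonnegative entries, rows summing to one. -/
def RowStochastic {n m : ℕ} (F : Matrix (Fin m) (Fin n) ℝ) : Prop :=
  (∀ j i, 0 ≤ F j i) ∧ ∀ j, ∑ i, F j i = 1

/-- A deterministic policy: a section of the state projection `s`. -/
def IsPolicy {n m : ℕ} (s : Fin m → Fin n) (π : Fin n → Fin m) : Prop :=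
  ∀ i, s (π i) = i

/-- The value vector `V_{π,R} = (I − γΠF)⁻¹ Π R`. -/
def valueVec {n m : ℕ} (γ : ℝ) (F : Matrix (Fin m) (Fin n) ℝ)
    (π : Fin n → Fin m) (R : Fin m → ℝ) : Fin n → ℝ :=
  ((1 : Matrix (Fin n) (Fin n) ℝ) - γ • (polMat π * F))⁻¹ *ᵥ (polMat π *ᵥ R)

/-- A policy is optimal for `R` when its value vector dominates all others componentwise. -/
def IsOptimal {n m : ℕ} (s : Fin m → Fin n) (γ : ℝ) (F : Matrix (Fin m) (Fin n) ℝ)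
    (R : Fin m → ℝ) (π : Fin n → Fin m) : Prop :=
  IsPolicy s π ∧ ∀ π', IsPolicy s π' → ∀ i, valueVec γ F π' R i ≤ valueVec γ F π R i

/-- `hmax R i = max_{j ∈ U_i} R j`. -/
def hmax {n m : ℕ} (s : Fin m → Fin n) (R : Fin m → ℝ) (i : Fin n) : ℝ :=
  sSup {x | ∃ j, s j = i ∧ R j = x}


/-- A reward is normal when its optimal value vector is zero. -/
def IsNormal {n m : ℕ} (s : Fin m → Fin n) (γ : ℝ) (F : Matrix (Fin m) (Fin n) ℝ)
    (R : Fin m → ℝ) : Prop :=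
  ∃ π, IsOptimal s γ F R π ∧ valueVec γ F π R = 0

lemma polMat_mul {n m : ℕ} (π : Fin n → Fin m) (F : Matrix (Fin m) (Fin n) ℝ) :
    polMat π * F = Matrix.of (fun i k => F (π i) k) := by
  ext i k
  simp [polMat, Matrix.mul_apply]

lemma polMat_mul_projMat {n m : ℕ} {s : Fin m → Fin n} {π : Fin n → Fin m}
    (h : IsPolicy s π) : polMat π * projMat s = 1 := by
  rw [polMat_mul]
  ext i k
  simp [projMat, h i, Matrix.one_apply, eq_comm]

lemma key_invertible {n m : ℕ} (γ : ℝ) (hγ0 : 0 ≤ γ) (hγ1 : γ < 1)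
    (F : Matrix (Fin m) (Fin n) ℝ) (hF : (∀ j i, 0 ≤ F j i) ∧ ∀ j, ∑ i, F j i = 1)
    (π : Fin n → Fin m) :
    IsUnit ((1 : Matrix (Fin n) (Fin n) ℝ) - γ • (polMat π * F)).det := by
  rw [isUnit_iff_ne_zero]
  apply _root_.det_ne_zero_of_sum_row_lt_diag
  intro k
  rw [polMat_mul]
  have h1 : ∑ j ∈ Finset.univ.erase k, ‖((1 : Matrix (Fin n) (Fin n) ℝ) - γ • Matrix.of (fun i k => F (π i) k)) k j‖
      = γ * ∑ j ∈ Finset.univ.erase k, F (π k) j := by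
    rw [Finset.mul_sum]
    apply Finset.sum_congr rfl
    intro j hj
    have : j ≠ k := (Finset.mem_erase.mp hj).1
    simp [Matrix.sub_apply, Matrix.one_apply_ne' this, abs_of_nonneg hγ0, abs_of_nonneg (hF.1 _ _)]
  have h2 : ∑ j ∈ Finset.univ.erase k, F (π k) j = 1 - F (π k) k := by
    rw [Finset.sum_erase_eq_sub (Finset.mem_univ k), hF.2]
  have hle : F (π k) k ≤ 1 := by
    rw [← hF.2 (π k)]
    exact Finset.single_le_sum (fun i _ => hF.1 (π k) i) (Finset.mem_univ k)
  have h3 : ((1 : Matrix (Fin n) (Fin n) ℝ) - γ • Matrix.of (fun i k => F (π i) k)) k k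
      = 1 - γ * F (π k) k := by simp [Matrix.sub_apply]
  rw [h1, h2, h3]
  have hpos : 0 < 1 - γ * F (π k) k := by nlinarith [hF.1 (π k) k]
  rw [Real.norm_eq_abs, abs_of_pos hpos]
  nlinarith [hF.1 (π k) k]

lemma valueVec_shift {n m : ℕ} (s : Fin m → Fin n)
    (γ : ℝ) (hγ0 : 0 ≤ γ) (hγ1 : γ < 1)
    (F : Matrix (Fin m) (Fin n) ℝ) (hF : (∀ j i, 0 ≤ F j i) ∧ ∀ j, ∑ i, F j i = 1)
    (R : Fin m → ℝ) (Δ : Fin n → ℝ) (π : Fin n → Fin m) (hπ : IsPolicy s π) :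
    valueVec γ F π (R + (γ • F - projMat s) *ᵥ Δ) = valueVec γ F π R - Δ := by
  set M := (1 : Matrix (Fin n) (Fin n) ℝ) - γ • (polMat π * F) with hM
  have hdet := key_invertible γ hγ0 hγ1 F hF π
  have h1 : polMat π * (γ • F - projMat s) = -M := by
    rw [Matrix.mul_sub, Matrix.mul_smul, polMat_mul_projMat hπ, hM, neg_sub]
  unfold valueVec
  rw [← hM]
  rw [Matrix.mulVec_add, Matrix.mulVec_mulVec, h1, Matrix.neg_mulVec,
    ← sub_eq_add_neg, Matrix.mulVec_sub]
  have h2 : M⁻¹ *ᵥ M *ᵥ Δ = Δ := by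
    rw [Matrix.mulVec_mulVec, Matrix.nonsing_inv_mul M hdet, Matrix.one_mulVec]
  rw [h2]

/-- Every ℓ-orbit contains exactly one normal reward: `R + B ⬝ᵥ V*_R` is
normal, and if `R + B ⬝ᵥ Δ` is normal then `Δ = V*_R`. -/
theorem orbit_unique_normal {n m : ℕ} (hn : 1 ≤ n) (hm : 1 ≤ m)
    (s : Fin m → Fin n) (hs : Function.Surjective s)
    (γ : ℝ) (hγ0 : 0 ≤ γ) (hγ1 : γ < 1)
    (F : Matrix (Fin m) (Fin n) ℝ) (hF : RowStochastic F)
    (R : Fin m → ℝ) (πs : Fin n → Fin m) (hπs : IsOptimal s γ F R πs) :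
    IsNormal s γ F (R + (γ • F - projMat s) *ᵥ valueVec γ F πs R) ∧
      ∀ Δ : Fin n → ℝ, IsNormal s γ F (R + (γ • F - projMat s) *ᵥ Δ) →
        Δ = valueVec γ F πs R := by
  have shift := fun (Δ : Fin n → ℝ) (π : Fin n → Fin m) (hπ : IsPolicy s π) =>
    valueVec_shift s γ hγ0 hγ1 F hF R Δ π hπ
  constructor
  · refine ⟨πs, ⟨hπs.1, fun π' hπ' i => ?_⟩, ?_⟩
    · rw [shift _ _ hπ', shift _ _ hπs.1]
      exact sub_le_sub_right (hπs.2 π' hπ' i) _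
    · rw [shift _ _ hπs.1, sub_self]
  · rintro Δ ⟨π, ⟨hπpol, hπopt⟩, hval⟩
    rw [shift _ _ hπpol, sub_eq_zero] at hval
    rw [← hval]
    funext i
    refine le_antisymm (hπs.2 π hπpol i) ?_
    have := hπopt πs hπs.1 i
    rw [shift _ _ hπs.1, shift _ _ hπpol] at this
    simpa using this
end
end

section
/- A reward R ∈ ℝ^m is normal, i.e. V*_R = 0, if and only if max_{j ∈ U_i} R^j = 0 for every state i ∈ Fin n. -/
open Matrix MeasureTheory Filter Topology

noncomputable section

/- ### Auxiliary lemmas -/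

lemma polMat_mulVec {n m : ℕ} (π : Fin n → Fin m) (R : Fin m → ℝ) (i : Fin n) :
    (polMat π *ᵥ R) i = R (π i) := by
  simp [polMat, Matrix.mulVec, dotProduct, ite_mul]

lemma polMat_mul_apply {n m : ℕ} (π : Fin n → Fin m) (F : Matrix (Fin m) (Fin n) ℝ)
    (i k : Fin n) : (polMat π * F) i k = F (π i) k := by
  simp [polMat, Matrix.mul_apply, ite_mul]

lemma polMat_mul_rowStochastic {n m : ℕ} (π : Fin n → Fin m) (F : Matrix (Fin m) (Fin n) ℝ)
    (hF : RowStochastic F) : RowStochastic (polMat π * F) := by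
  constructor
  · intro i k; rw [polMat_mul_apply]; exact hF.1 _ _
  · intro i; simp only [polMat_mul_apply]; exact hF.2 _

lemma key_nonneg {n : ℕ} [NeZero n] {γ : ℝ} (hγ0 : 0 ≤ γ) (hγ1 : γ < 1)
    {M : Matrix (Fin n) (Fin n) ℝ} (hM : RowStochastic M)
    {x : Fin n → ℝ} (hx : ∀ i, γ * ∑ k, M i k * x k ≤ x i) : ∀ i, 0 ≤ x i := by
  obtain ⟨i0, -, hi0⟩ := Finset.exists_min_image Finset.univ x ⟨0, Finset.mem_univ 0⟩
  have hsum : x i0 ≤ ∑ k, M i0 k * x k := by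
    calc x i0 = ∑ k, M i0 k * x i0 := by rw [← Finset.sum_mul, hM.2 i0, one_mul]
    _ ≤ ∑ k, M i0 k * x k :=
      Finset.sum_le_sum fun k _ => mul_le_mul_of_nonneg_left (hi0 k (Finset.mem_univ k)) (hM.1 _ _)
  have h1 : γ * x i0 ≤ x i0 := le_trans (mul_le_mul_of_nonneg_left hsum hγ0) (hx i0)
  have h2 : 0 ≤ x i0 := by nlinarith
  intro i; exact le_trans h2 (hi0 i (Finset.mem_univ i))

lemma key_nonpos {n : ℕ} [NeZero n] {γ : ℝ} (hγ0 : 0 ≤ γ) (hγ1 : γ < 1)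
    {M : Matrix (Fin n) (Fin n) ℝ} (hM : RowStochastic M)
    {x : Fin n → ℝ} (hx : ∀ i, x i ≤ γ * ∑ k, M i k * x k) : ∀ i, x i ≤ 0 := by
  have hneg : ∀ i, ∑ k, M i k * (-x k) = -∑ k, M i k * x k := fun i => by
    simp [mul_neg]
  have := key_nonneg hγ0 hγ1 hM (x := fun k => -x k) (fun i => by
    have : γ * ∑ k, M i k * (-x k) = -(γ * ∑ k, M i k * x k) := by
      rw [hneg i]; ring
    rw [this]
    exact neg_le_neg (hx i))
  intro i; have := this i; simp at this; linarith

lemma one_sub_row {n : ℕ} (i : Fin n) (c v : Fin n → ℝ) (γ : ℝ) :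
    ∑ x, ((1 : Matrix (Fin n) (Fin n) ℝ) i x - γ * c x) * v x = v i - γ * ∑ x, c x * v x := by
  simp [sub_mul, Finset.sum_sub_distrib, Matrix.one_apply, ite_mul, mul_assoc, Finset.mul_sum]

lemma det_ne_zero' {n : ℕ} [NeZero n] {γ : ℝ} (hγ0 : 0 ≤ γ) (hγ1 : γ < 1)
    {M : Matrix (Fin n) (Fin n) ℝ} (hM : RowStochastic M) :
    ((1 : Matrix (Fin n) (Fin n) ℝ) - γ • M).det ≠ 0 := by
  intro hdet
  obtain ⟨v, hv0, hv⟩ := (Matrix.exists_mulVec_eq_zero_iff).2 hdet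
  have hcomp : ∀ i, v i = γ * ∑ k, M i k * v k := by
    intro i
    have h := congrFun hv i
    simp only [Matrix.mulVec, dotProduct, Matrix.sub_apply, Matrix.smul_apply,
      smul_eq_mul, Pi.zero_apply] at h
    rw [one_sub_row] at h
    linarith
  have h1 := key_nonneg hγ0 hγ1 hM (x := v) (fun i => (hcomp i).ge)
  have h2 := key_nonpos hγ0 hγ1 hM (x := v) (fun i => (hcomp i).le)
  exact hv0 (funext fun i => le_antisymm (h2 i) (h1 i))

lemma valueVec_eq {n m : ℕ} [NeZero n] {γ : ℝ} (hγ0 : 0 ≤ γ) (hγ1 : γ < 1)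
    {F : Matrix (Fin m) (Fin n) ℝ} (hF : RowStochastic F)
    (π : Fin n → Fin m) (R : Fin m → ℝ) (i : Fin n) :
    valueVec γ F π R i = R (π i) + γ * ∑ k, F (π i) k * valueVec γ F π R k := by
  unfold valueVec
  set A := (1 : Matrix (Fin n) (Fin n) ℝ) - γ • (polMat π * F) with hA
  have hdet : IsUnit A.det := (det_ne_zero' hγ0 hγ1 (polMat_mul_rowStochastic π F hF)).isUnit
  have hAV : A *ᵥ (A⁻¹ *ᵥ (polMat π *ᵥ R)) = polMat π *ᵥ R := by
    rw [Matrix.mulVec_mulVec, Matrix.mul_nonsing_inv _ hdet, Matrix.one_mulVec]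
  have h := congrFun hAV i
  rw [polMat_mulVec] at h
  set V := A⁻¹ *ᵥ (polMat π *ᵥ R) with hV
  have hlhs : (A *ᵥ V) i = V i - γ * ∑ k, F (π i) k * V k := by
    simp only [hA, Matrix.mulVec, dotProduct, Matrix.sub_apply, Matrix.smul_apply,
      smul_eq_mul, polMat_mul_apply]
    exact one_sub_row i (fun k => F (π i) k) V γ
  rw [hlhs] at h
  linarith

/-- A reward `R` is normal (its optimal value vector vanishes) iff
`max_{j ∈ U_i} R j = 0` for every state `i`. -/
theorem normal_iff_max_zero {n m : ℕ} (hn : 1 ≤ n) (hm : 1 ≤ m)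
    (s : Fin m → Fin n) (hs : Function.Surjective s)
    (γ : ℝ) (hγ0 : 0 ≤ γ) (hγ1 : γ < 1)
    (F : Matrix (Fin m) (Fin n) ℝ) (hF : RowStochastic F)
    (R : Fin m → ℝ) (πs : Fin n → Fin m) (hπs : IsOptimal s γ F R πs) :
    valueVec γ F πs R = 0 ↔ ∀ i, hmax s R i = 0 := by
  haveI : NeZero n := ⟨Nat.one_le_iff_ne_zero.mp hn⟩
  obtain ⟨hpol, hopt⟩ := hπs
  set S : Fin n → Set ℝ := fun i => {x | ∃ j, s j = i ∧ R j = x} with hS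
  have hSfin : ∀ i, (S i).Finite := fun i =>
    Set.Finite.subset (Set.finite_range R) (by rintro x ⟨j, -, hj⟩; exact ⟨j, hj⟩)
  have hSne : ∀ i, (S i).Nonempty := fun i => by
    obtain ⟨j, hj⟩ := hs i; exact ⟨R j, j, hj, rfl⟩
  have hmax_def : ∀ i, hmax s R i = sSup (S i) := fun i => rfl
  constructor
  · intro hV i
    have hVi : ∀ i', valueVec γ F πs R i' = 0 := fun i' => by rw [hV]; rfl
    have hRπ : ∀ i', R (πs i') = 0 := by
      intro i'
      have h := valueVec_eq hγ0 hγ1 hF πs R i'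
      simp only [hVi] at h
      simpa using h.symm
    have hRle : ∀ j, s j = i → R j ≤ 0 := by
      intro j hj
      by_contra hpos
      push_neg at hpos
      set π' := Function.update πs i j with hπ'
      have hpol' : IsPolicy s π' := by
        intro i'
        by_cases hii : i' = i
        · subst hii; simp [hπ', hj]
        · simp [hπ', Function.update_of_ne hii, hpol i']
      have hRπ'_nonneg : ∀ i', 0 ≤ R (π' i') := by
        intro i'
        by_cases hii : i' = i
        · subst hii; simp [hπ']; exact le_of_lt hpos
        · simp [hπ', Function.update_of_ne hii, hRπ i']
      have hge : ∀ i', 0 ≤ valueVec γ F π' R i' := by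
        apply key_nonneg hγ0 hγ1 (polMat_mul_rowStochastic π' F hF)
        intro i'
        have h := valueVec_eq hγ0 hγ1 hF π' R i'
        simp only [polMat_mul_apply]
        nlinarith [hRπ'_nonneg i']
      have hsum_nonneg : 0 ≤ ∑ k, F (π' i) k * valueVec γ F π' R k :=
        Finset.sum_nonneg fun k _ => mul_nonneg (hF.1 _ _) (hge k)
      have hVi' : valueVec γ F π' R i = R (π' i) + γ * ∑ k, F (π' i) k * valueVec γ F π' R k :=
        valueVec_eq hγ0 hγ1 hF π' R i
      have hπ'i : π' i = j := by simp [hπ']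
      rw [hπ'i] at hsum_nonneg hVi'
      have hbig : 0 < valueVec γ F π' R i := by
        rw [hVi']
        nlinarith [mul_nonneg hγ0 hsum_nonneg]
      have := hopt π' hpol' i
      rw [hVi i] at this
      linarith
    rw [hmax_def]
    apply le_antisymm
    · apply csSup_le (hSne i)
      rintro x ⟨j, hj, rfl⟩
      exact hRle j hj
    · exact le_csSup (hSfin i).bddAbove ⟨πs i, hpol i, hRπ i⟩
  · intro hm0
    have hRle : ∀ j, R j ≤ 0 := by
      intro j
      have h1 : R j ≤ sSup (S (s j)) := le_csSup (hSfin (s j)).bddAbove ⟨j, rfl, rfl⟩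
      rw [← hmax_def, hm0] at h1
      exact h1
    have h0mem : ∀ i, ∃ j, s j = i ∧ R j = 0 := by
      intro i
      have h := (hSne i).csSup_mem (hSfin i)
      rw [← hmax_def, hm0] at h
      exact h
    choose π0 hπ0s hπ0R using h0mem
    have hV0 : valueVec γ F π0 R = 0 := by
      unfold valueVec
      have hz : polMat π0 *ᵥ R = 0 := funext fun i => by
        rw [polMat_mulVec, hπ0R i]; rfl
      rw [hz, Matrix.mulVec_zero]
    have hVge : ∀ i, 0 ≤ valueVec γ F πs R i := by
      intro i
      have := hopt π0 hπ0s i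
      rw [hV0] at this
      exact this
    have hVle : ∀ i, valueVec γ F πs R i ≤ 0 := by
      apply key_nonpos hγ0 hγ1 (polMat_mul_rowStochastic πs F hF)
      intro i
      have h := valueVec_eq hγ0 hγ1 hF πs R i
      simp only [polMat_mul_apply]
      nlinarith [hRle (πs i)]
    exact funext fun i => le_antisymm (hVle i) (hVge i)
end
end

section
/- For each deterministic policy π define N_π := {R ∈ ℝ^m : R ≤ 0 and (ΠR)^i = 0 for every state i}. Then the normal set N equals the union ⋃_π N_π over all deterministic policies π, and for every R ∈ N_π the policy π is optimal for R and V_{π,R} = 0. -/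
open Matrix MeasureTheory Filter Topology

noncomputable section

lemma det_one_sub_smul_ne_zero {n : ℕ} (hn : 1 ≤ n) {γ : ℝ} (hγ0 : 0 ≤ γ) (hγ1 : γ < 1)
    (M : Matrix (Fin n) (Fin n) ℝ) (hM1 : ∀ i k, 0 ≤ M i k) (hM2 : ∀ i, ∑ k, M i k = 1) :
    ((1 : Matrix (Fin n) (Fin n) ℝ) - γ • M).det ≠ 0 := by
  intro hdet
  obtain ⟨v, hv, hAv⟩ := (Matrix.exists_mulVec_eq_zero_iff).2 hdet
  obtain ⟨i, -, hi⟩ := Finset.exists_max_image Finset.univ (fun i => |v i|)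
    ⟨⟨0, hn⟩, Finset.mem_univ _⟩
  have hvi : v i = γ * (M *ᵥ v) i := by
    have := congrFun hAv i
    simp [Matrix.sub_mulVec, Matrix.one_mulVec, Matrix.smul_mulVec] at this
    linarith
  have hpos : 0 < |v i| := by
    obtain ⟨j, hj⟩ := Function.ne_iff.mp hv
    exact lt_of_lt_of_le (abs_pos.mpr hj) (hi j (Finset.mem_univ _))
  have hbound : |v i| ≤ γ * |v i| := by
    calc |v i| = γ * |(M *ᵥ v) i| := by rw [hvi, abs_mul, abs_of_nonneg hγ0]
    _ ≤ γ * |v i| := by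
        apply mul_le_mul_of_nonneg_left _ hγ0
        calc |(M *ᵥ v) i| = |∑ k, M i k * v k| := rfl
        _ ≤ ∑ k, |M i k * v k| := Finset.abs_sum_le_sum_abs _ _
        _ ≤ ∑ k, M i k * |v i| := by
            apply Finset.sum_le_sum
            intro k _
            rw [abs_mul, abs_of_nonneg (hM1 i k)]
            exact mul_le_mul_of_nonneg_left (hi k (Finset.mem_univ _)) (hM1 i k)
        _ = |v i| := by rw [← Finset.sum_mul, hM2 i, one_mul]
  nlinarith

lemma max_principle {n : ℕ} (hn : 1 ≤ n) {γ : ℝ} (hγ0 : 0 ≤ γ) (hγ1 : γ < 1)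
    (M : Matrix (Fin n) (Fin n) ℝ) (hM1 : ∀ i k, 0 ≤ M i k) (hM2 : ∀ i, ∑ k, M i k = 1)
    (b V : Fin n → ℝ) (hb : ∀ i, b i ≤ 0)
    (hV : ∀ i, V i = b i + γ * (M *ᵥ V) i) : ∀ i, V i ≤ 0 := by
  obtain ⟨i, -, hi⟩ := Finset.exists_max_image Finset.univ V ⟨⟨0, hn⟩, Finset.mem_univ _⟩
  have hVi : V i ≤ 0 := by
    by_contra h
    push_neg at h
    have hMV : (M *ᵥ V) i ≤ V i := by
      calc (M *ᵥ V) i = ∑ k, M i k * V k := rfl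
      _ ≤ ∑ k, M i k * V i := by
          apply Finset.sum_le_sum
          intro k _
          exact mul_le_mul_of_nonneg_left (hi k (Finset.mem_univ _)) (hM1 i k)
      _ = V i := by rw [← Finset.sum_mul, hM2 i, one_mul]
    have := hV i
    nlinarith [hb i]
  intro j
  exact le_trans (hi j (Finset.mem_univ _)) hVi

/-- The normal set is the union over deterministic policies `π` of
`N_π = {R : R ≤ 0 ∧ ΠR = 0}`, and for every `R ∈ N_π` the policy `π` is optimal for `R`
with zero value vector. -/
theorem normal_set_decomposition {n m : ℕ} (hn : 1 ≤ n) (hm : 1 ≤ m)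
    (s : Fin m → Fin n) (hs : Function.Surjective s)
    (γ : ℝ) (hγ0 : 0 ≤ γ) (hγ1 : γ < 1)
    (F : Matrix (Fin m) (Fin n) ℝ) (hF : RowStochastic F) :
    ({R : Fin m → ℝ | ∀ i, hmax s R i = 0} =
        ⋃ π ∈ {π : Fin n → Fin m | IsPolicy s π},
          {R : Fin m → ℝ | R ≤ 0 ∧ ∀ i, (polMat π *ᵥ R) i = 0}) ∧
      ∀ π, IsPolicy s π → ∀ R : Fin m → ℝ, R ≤ 0 → (∀ i, (polMat π *ᵥ R) i = 0) →
        IsOptimal s γ F R π ∧ valueVec γ F π R = 0 := by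
  -- basic facts about the sets in hmax
  have hfin : ∀ (R : Fin m → ℝ) (i : Fin n), {x | ∃ j, s j = i ∧ R j = x}.Finite := by
    intro R i
    apply (Set.finite_range R).subset
    rintro x ⟨j, -, rfl⟩
    exact ⟨j, rfl⟩
  have hne : ∀ (R : Fin m → ℝ) (i : Fin n), {x | ∃ j, s j = i ∧ R j = x}.Nonempty := by
    intro R i; obtain ⟨j, hj⟩ := hs i; exact ⟨R j, j, hj, rfl⟩
  -- the stochasticity of ΠF
  have hstoch : ∀ π : Fin n → Fin m,
      (∀ i k, 0 ≤ (polMat π * F) i k) ∧ ∀ i, ∑ k, (polMat π * F) i k = 1 := by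
    intro π
    constructor
    · intro i k; rw [polMat_mul_apply]; exact hF.1 _ _
    · intro i
      simp only [polMat_mul_apply]
      exact hF.2 _
  constructor
  · ext R
    simp only [Set.mem_setOf_eq, Set.mem_iUnion]
    constructor
    · intro hR
      have hchoice : ∀ i : Fin n, ∃ j, s j = i ∧ R j = 0 := by
        intro i
        have := (hne R i).csSup_mem (hfin R i)
        rw [show sSup {x | ∃ j, s j = i ∧ R j = x} = hmax s R i from rfl, hR i] at this
        exact this
      choose π hπ1 hπ2 using hchoice
      refine ⟨π, hπ1, ?_, ?_⟩
      · intro j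
        have hle : R j ≤ hmax s R (s j) :=
          le_csSup ((hfin R (s j)).bddAbove) ⟨j, rfl, rfl⟩
        rw [hR (s j)] at hle
        exact hle
      · intro i; rw [polMat_mulVec]; exact hπ2 i
    · rintro ⟨π, hπ, hR0, hPR⟩
      intro i
      apply le_antisymm
      · apply csSup_le (hne R i)
        rintro x ⟨j, -, rfl⟩
        exact hR0 j
      · apply le_csSup ((hfin R i).bddAbove)
        exact ⟨π i, hπ i, by have := hPR i; rwa [polMat_mulVec] at this⟩
  · intro π hπ R hR0 hPR
    have hval0 : valueVec γ F π R = 0 := by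
      have : polMat π *ᵥ R = 0 := funext hPR
      unfold valueVec
      rw [this, Matrix.mulVec_zero]
    refine ⟨⟨hπ, ?_⟩, hval0⟩
    intro π' hπ' i
    rw [hval0]
    -- show valueVec γ F π' R ≤ 0
    set M := polMat π' * F with hM
    obtain ⟨hM1, hM2⟩ := hstoch π'
    have hdet := det_one_sub_smul_ne_zero hn hγ0 hγ1 M hM1 hM2
    set A := (1 : Matrix (Fin n) (Fin n) ℝ) - γ • M with hA
    set V := valueVec γ F π' R with hVdef
    have hAV : A *ᵥ V = polMat π' *ᵥ R := by
      rw [hVdef]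
      unfold valueVec
      rw [Matrix.mulVec_mulVec, Matrix.mul_nonsing_inv _ (isUnit_iff_ne_zero.mpr hdet),
        Matrix.one_mulVec]
    have hVeq : ∀ i, V i = (polMat π' *ᵥ R) i + γ * (M *ᵥ V) i := by
      intro i
      have := congrFun hAV i
      rw [hA, Matrix.sub_mulVec, Matrix.one_mulVec, Matrix.smul_mulVec] at this
      simp only [Pi.sub_apply, Pi.smul_apply, smul_eq_mul] at this
      linarith
    have := max_principle hn hγ0 hγ1 M hM1 hM2 (polMat π' *ᵥ R) V
      (fun i => by rw [polMat_mulVec]; exact hR0 (π' i)) hVeq i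
    simpa using this
end
end

section
/- The map Φ : ℝ^m → N × ℝ^n defined by Φ(R) := (R + B·V*_R, V*_R) is a homeomorphism onto N × ℝ^n (where N ⊂ ℝ^m carries the subspace topology and N × ℝ^n the product topology), with continuous inverse (R_n, Δ) ↦ R_n − BΔ. -/
open Matrix MeasureTheory Filter Topology

noncomputable section

namespace RST

variable {n m : ℕ}

lemma polMat_mulVec (π : Fin n → Fin m) (R : Fin m → ℝ) (i : Fin n) :
    (polMat π *ᵥ R) i = R (π i) := by
  simp [polMat, Matrix.mulVec, dotProduct, ite_mul]

lemma polMat_mul_apply (F : Matrix (Fin m) (Fin n) ℝ) (π : Fin n → Fin m) (i : Fin n) (k : Fin n) :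
    (polMat π * F) i k = F (π i) k := by
  simp [polMat, Matrix.mul_apply, ite_mul]

lemma polMat_mul_projMat {s : Fin m → Fin n} {π : Fin n → Fin m} (hπ : IsPolicy s π) :
    polMat π * projMat s = 1 := by
  ext i k
  rw [Matrix.mul_apply]
  simp only [polMat, projMat, Matrix.of_apply, Matrix.one_apply]
  have h : ∀ j : Fin m, (if j = π i then (1:ℝ) else 0) * (if s j = k then 1 else 0)
      = if j = π i then (if s j = k then (1:ℝ) else 0) else 0 := by
    intro j; split <;> simp
  rw [Finset.sum_congr rfl fun j _ => h j, Finset.sum_ite_eq' Finset.univ (π i)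
      (fun j => if s j = k then (1:ℝ) else 0)]
  simp [hπ i]

lemma M_mulVec_apply (γ : ℝ) (A : Matrix (Fin n) (Fin n) ℝ) (x : Fin n → ℝ) (i : Fin n) :
    (((1 : Matrix (Fin n) (Fin n) ℝ) - γ • A) *ᵥ x) i = x i - γ * (A *ᵥ x) i := by
  simp [Matrix.sub_mulVec, Matrix.smul_mulVec, Matrix.one_mulVec]

lemma mono {γ : ℝ} (hγ0 : 0 ≤ γ) (hγ1 : γ < 1)
    (A : Matrix (Fin n) (Fin n) ℝ) (hA0 : ∀ i k, 0 ≤ A i k) (hA1 : ∀ i, ∑ k, A i k = 1)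
    (x : Fin n → ℝ)
    (hx : ∀ i, 0 ≤ (((1 : Matrix (Fin n) (Fin n) ℝ) - γ • A) *ᵥ x) i) :
    ∀ i, 0 ≤ x i := by
  by_contra h
  push_neg at h
  obtain ⟨i0, hi0⟩ := h
  obtain ⟨i, -, hmin⟩ := Finset.exists_min_image Finset.univ x ⟨i0, Finset.mem_univ _⟩
  have hxi : x i < 0 := lt_of_le_of_lt (hmin i0 (Finset.mem_univ _)) hi0
  have hAx : x i ≤ (A *ᵥ x) i := by
    calc x i = ∑ k, A i k * x i := by rw [← Finset.sum_mul, hA1 i, one_mul]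
    _ ≤ ∑ k, A i k * x k :=
      Finset.sum_le_sum fun k _ => mul_le_mul_of_nonneg_left (hmin k (Finset.mem_univ _)) (hA0 i k)
    _ = (A *ᵥ x) i := rfl
  have hx2 := hx i
  rw [M_mulVec_apply] at hx2
  nlinarith [mul_le_mul_of_nonneg_left hAx hγ0]

lemma isUnit_M {γ : ℝ} (hγ0 : 0 ≤ γ) (hγ1 : γ < 1)
    (A : Matrix (Fin n) (Fin n) ℝ) (hA0 : ∀ i k, 0 ≤ A i k) (hA1 : ∀ i, ∑ k, A i k = 1) :
    IsUnit ((1 : Matrix (Fin n) (Fin n) ℝ) - γ • A) := by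
  rw [← Matrix.mulVec_injective_iff_isUnit]
  intro x y hxy
  have hd : ((1 : Matrix (Fin n) (Fin n) ℝ) - γ • A) *ᵥ (x - y) = 0 := by
    rw [Matrix.mulVec_sub, hxy, sub_self]
  have h1 : ∀ i, 0 ≤ (x - y) i :=
    mono hγ0 hγ1 A hA0 hA1 _ (fun i => by rw [hd]; simp)
  have h2 : ∀ i, 0 ≤ (y - x) i := by
    refine mono hγ0 hγ1 A hA0 hA1 _ (fun i => ?_)
    have : ((1 : Matrix (Fin n) (Fin n) ℝ) - γ • A) *ᵥ (y - x) = 0 := by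
      rw [Matrix.mulVec_sub, hxy, sub_self]
    rw [this]; simp
  funext i
  have := h1 i; have := h2 i
  simp only [Pi.sub_apply] at *
  linarith

lemma M_mulVec_valueVec {γ : ℝ} {F : Matrix (Fin m) (Fin n) ℝ} {π : Fin n → Fin m}
    (hu : IsUnit ((1 : Matrix (Fin n) (Fin n) ℝ) - γ • (polMat π * F))) (R : Fin m → ℝ) :
    ((1 : Matrix (Fin n) (Fin n) ℝ) - γ • (polMat π * F)) *ᵥ valueVec γ F π R = polMat π *ᵥ R := by
  unfold valueVec
  rw [Matrix.mulVec_mulVec, Matrix.mul_nonsing_inv _ ((Matrix.isUnit_iff_isUnit_det _).mp hu),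
    Matrix.one_mulVec]

lemma valueVec_shift {s : Fin m → Fin n} {γ : ℝ} {F : Matrix (Fin m) (Fin n) ℝ}
    {π : Fin n → Fin m} (hπ : IsPolicy s π)
    (hu : IsUnit ((1 : Matrix (Fin n) (Fin n) ℝ) - γ • (polMat π * F)))
    (R : Fin m → ℝ) (v : Fin n → ℝ) :
    valueVec γ F π (R + (γ • F - projMat s) *ᵥ v) = valueVec γ F π R - v := by
  have hdet := (Matrix.isUnit_iff_isUnit_det _).mp hu
  have hB : polMat π * (γ • F - projMat s)
      = -((1 : Matrix (Fin n) (Fin n) ℝ) - γ • (polMat π * F)) := by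
    rw [Matrix.mul_sub, Matrix.mul_smul, polMat_mul_projMat hπ, neg_sub]
  unfold valueVec
  rw [Matrix.mulVec_add, Matrix.mulVec_mulVec, hB, Matrix.neg_mulVec, ← sub_eq_add_neg,
    Matrix.mulVec_sub, Matrix.mulVec_mulVec, Matrix.mulVec_mulVec, Matrix.nonsing_inv_mul _ hdet, Matrix.one_mulVec]

lemma projMat_mulVec (s : Fin m → Fin n) (V : Fin n → ℝ) (j : Fin m) :
    (projMat s *ᵥ V) j = V (s j) := by
  simp [projMat, Matrix.mulVec, dotProduct, ite_mul]

lemma hmaxSet_finite (s : Fin m → Fin n) (R : Fin m → ℝ) (i : Fin n) :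
    {x | ∃ j, s j = i ∧ R j = x}.Finite := by
  refine (Set.finite_range R).subset ?_
  rintro x ⟨j, -, rfl⟩
  exact ⟨j, rfl⟩

lemma le_hmax (s : Fin m → Fin n) (R : Fin m → ℝ) {j : Fin m} {i : Fin n} (hj : s j = i) :
    R j ≤ hmax s R i :=
  le_csSup (hmaxSet_finite s R i).bddAbove ⟨j, hj, rfl⟩

lemma exists_hmax {s : Fin m → Fin n} (hs : Function.Surjective s) (R : Fin m → ℝ) (i : Fin n) :
    ∃ j, s j = i ∧ R j = hmax s R i := by
  obtain ⟨j0, hj0⟩ := hs i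
  have h := Set.Nonempty.csSup_mem (s := {x | ∃ j, s j = i ∧ R j = x})
    ⟨R j0, j0, hj0, rfl⟩ (hmaxSet_finite s R i)
  exact h

lemma hmax_eq_zero {s : Fin m → Fin n} (R : Fin m → ℝ) {i : Fin n}
    (h0 : ∃ j, s j = i ∧ R j = 0) (hle : ∀ j, s j = i → R j ≤ 0) : hmax s R i = 0 := by
  obtain ⟨j, hj, hRj⟩ := h0
  refine le_antisymm (csSup_le ⟨R j, j, hj, rfl⟩ ?_) (hRj ▸ le_hmax s R hj)
  rintro x ⟨j', hj', rfl⟩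
  exact hle j' hj'

end RST

/-- The map `Φ(R) = (R + B V*_R, V*_R)` is a homeomorphism from the reward
space onto `N × ℝⁿ`, with inverse `(Rₙ, Δ) ↦ Rₙ − BΔ`. -/
theorem reward_space_trivialization {n m : ℕ} (hn : 1 ≤ n) (hm : 1 ≤ m)
    (s : Fin m → Fin n) (hs : Function.Surjective s)
    (γ : ℝ) (hγ0 : 0 ≤ γ) (hγ1 : γ < 1)
    (F : Matrix (Fin m) (Fin n) ℝ) (hF : RowStochastic F)
    (opt : (Fin m → ℝ) → (Fin n → Fin m))
    (hopt : ∀ R, IsOptimal s γ F R (opt R)) :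
    ∃ Φ : (Fin m → ℝ) ≃ₜ
        ({R : Fin m → ℝ // ∀ i, hmax s R i = 0} × (Fin n → ℝ)),
      (∀ R : Fin m → ℝ,
          ((Φ R).1 : Fin m → ℝ) = R + (γ • F - projMat s) *ᵥ valueVec γ F (opt R) R ∧
          (Φ R).2 = valueVec γ F (opt R) R) ∧
      ∀ p : {R : Fin m → ℝ // ∀ i, hmax s R i = 0} × (Fin n → ℝ),
        Φ.symm p = (p.1 : Fin m → ℝ) - (γ • F - projMat s) *ᵥ p.2 := by
  classical
  obtain ⟨hF0, hF1⟩ := hF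
  have hA0 : ∀ (π : Fin n → Fin m) (i k : Fin n), 0 ≤ (polMat π * F) i k := fun π i k => by
    rw [RST.polMat_mul_apply]; exact hF0 _ _
  have hA1 : ∀ (π : Fin n → Fin m) (i : Fin n), ∑ k, (polMat π * F) i k = 1 := fun π i => by
    simp only [RST.polMat_mul_apply]; exact hF1 _
  have hu : ∀ π : Fin n → Fin m, IsUnit ((1 : Matrix (Fin n) (Fin n) ℝ) - γ • (polMat π * F)) :=
    fun π => RST.isUnit_M hγ0 hγ1 _ (hA0 π) (hA1 π)
  -- componentwise Bellman-type identity for any policy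
  have hMV : ∀ (π : Fin n → Fin m) (R : Fin m → ℝ) (k : Fin n),
      valueVec γ F π R k - γ * (F *ᵥ valueVec γ F π R) (π k) = R (π k) := by
    intro π R k
    have h := congrFun (RST.M_mulVec_valueVec (hu π) R) k
    rw [RST.M_mulVec_apply] at h
    rw [← RST.polMat_mulVec π R k, ← h]
    congr 2
    rw [← Matrix.mulVec_mulVec, RST.polMat_mulVec]
  -- shift property of the optimal value
  have hshift : ∀ (R : Fin m → ℝ) (v : Fin n → ℝ),
      valueVec γ F (opt (R + (γ • F - projMat s) *ᵥ v)) (R + (γ • F - projMat s) *ᵥ v)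
        = valueVec γ F (opt R) R - v := by
    intro R v
    funext i
    have h1 := congrFun (RST.valueVec_shift (s := s)
      (hopt (R + (γ • F - projMat s) *ᵥ v)).1 (hu _) R v) i
    have h2 := congrFun (RST.valueVec_shift (s := s) (hopt R).1 (hu _) R v) i
    have h3 := (hopt R).2 _ (hopt (R + (γ • F - projMat s) *ᵥ v)).1 i
    have h4 := (hopt (R + (γ • F - projMat s) *ᵥ v)).2 _ (hopt R).1 i
    simp only [Pi.sub_apply] at h1 h2 ⊢
    linarith
  -- R ∈ N implies optimal value is 0
  have hVN : ∀ R : Fin m → ℝ, (∀ i, hmax s R i = 0) → valueVec γ F (opt R) R = 0 := by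
    intro R hR
    have hRle : ∀ j, R j ≤ 0 := fun j => by
      have h := RST.le_hmax s R (rfl : s j = s j); rwa [hR (s j)] at h
    have hπ0 : ∀ i, ∃ j, s j = i ∧ R j = 0 := fun i => by
      obtain ⟨j, hj, hRj⟩ := RST.exists_hmax hs R i
      exact ⟨j, hj, by rw [hRj, hR i]⟩
    choose π0 hπ0s hπ0R using hπ0
    have hv0 : valueVec γ F π0 R = 0 := by
      unfold valueVec
      have hz : polMat π0 *ᵥ R = 0 := by
        funext i; rw [RST.polMat_mulVec, hπ0R i]; rfl
      rw [hz, Matrix.mulVec_zero]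
    have hle : ∀ i, valueVec γ F (opt R) R i ≤ 0 := by
      have hmono := RST.mono hγ0 hγ1 _ (hA0 (opt R)) (hA1 (opt R))
        (-(valueVec γ F (opt R) R)) (fun i => by
          rw [Matrix.mulVec_neg]
          have h := congrFun (RST.M_mulVec_valueVec (hu (opt R)) R) i
          simp only [Pi.neg_apply, h, RST.polMat_mulVec]
          linarith [hRle (opt R i)])
      intro i
      have := hmono i
      simp only [Pi.neg_apply] at this
      linarith
    funext i
    have hge := (hopt R).2 π0 hπ0s i
    rw [hv0] at hge
    simp only [Pi.zero_apply] at hge ⊢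
    exact le_antisymm (hle i) hge
  -- Bellman inequality via policy improvement
  have hbell_le : ∀ (R : Fin m → ℝ) (j : Fin m),
      R j + γ * (F *ᵥ valueVec γ F (opt R) R) j ≤ valueVec γ F (opt R) R (s j) := by
    intro R j
    by_contra hcon
    push_neg at hcon
    set W := valueVec γ F (opt R) R with hW
    set π' := Function.update (opt R) (s j) j with hπ'
    have hπ'sj : π' (s j) = j := Function.update_self _ _ _
    have hπ'ne : ∀ k, k ≠ s j → π' k = opt R k := fun k hk => Function.update_of_ne hk _ _
    have hπ'pol : IsPolicy s π' := by
      intro i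
      rcases eq_or_ne i (s j) with hi | hi
      · rw [hi, hπ'sj]
      · rw [hπ'ne i hi]; exact (hopt R).1 i
    have hMd : ∀ k, (((1 : Matrix (Fin n) (Fin n) ℝ) - γ • (polMat π' * F)) *ᵥ
        (valueVec γ F π' R - W)) k = R (π' k) + γ * (F *ᵥ W) (π' k) - W k := by
      intro k
      have e1 := congrFun (RST.M_mulVec_valueVec (hu π') R) k
      have e2 := RST.M_mulVec_apply γ (polMat π' * F) W k
      have e3 : ((polMat π' * F) *ᵥ W) k = (F *ᵥ W) (π' k) := by
        rw [← Matrix.mulVec_mulVec, RST.polMat_mulVec]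
      rw [Matrix.mulVec_sub, Pi.sub_apply, e1, RST.polMat_mulVec, e2, e3]
      ring
    have hc : ∀ k, 0 ≤ (((1 : Matrix (Fin n) (Fin n) ℝ) - γ • (polMat π' * F)) *ᵥ
        (valueVec γ F π' R - W)) k := by
      intro k
      rw [hMd k]
      rcases eq_or_ne k (s j) with hk | hk
      · rw [hk, hπ'sj]; linarith
      · rw [hπ'ne k hk]
        have hb := hMV (opt R) R k
        rw [← hW] at hb
        linarith
    have hd0 : ∀ k, 0 ≤ (valueVec γ F π' R - W) k :=
      RST.mono hγ0 hγ1 _ (hA0 π') (hA1 π') _ hc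
    have h4 : 0 ≤ ((polMat π' * F) *ᵥ (valueVec γ F π' R - W)) (s j) := by
      show 0 ≤ ∑ l, (polMat π' * F) (s j) l * (valueVec γ F π' R - W) l
      exact Finset.sum_nonneg fun l _ => mul_nonneg (hA0 π' (s j) l) (hd0 l)
    have hstep := RST.M_mulVec_apply γ (polMat π' * F) (valueVec γ F π' R - W) (s j)
    have hMdsj := hMd (s j)
    rw [hπ'sj] at hMdsj
    have hfin : 0 < (valueVec γ F π' R - W) (s j) := by
      nlinarith [mul_nonneg hγ0 h4]
    have hoptle := (hopt R).2 π' hπ'pol (s j)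
    rw [← hW] at hoptle
    simp only [Pi.sub_apply] at hfin
    linarith
  -- evaluation of B *ᵥ V
  have hBapp : ∀ (V : Fin n → ℝ) (j : Fin m),
      ((γ • F - projMat s) *ᵥ V) j = γ * (F *ᵥ V) j - V (s j) := by
    intro V j
    rw [Matrix.sub_mulVec]
    simp [Matrix.smul_mulVec, RST.projMat_mulVec]
  -- first component lies in N
  have hmem : ∀ (R : Fin m → ℝ) (i : Fin n),
      hmax s (R + (γ • F - projMat s) *ᵥ valueVec γ F (opt R) R) i = 0 := by
    intro R i
    apply RST.hmax_eq_zero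
    · refine ⟨opt R i, (hopt R).1 i, ?_⟩
      rw [Pi.add_apply, hBapp]
      have hb := hMV (opt R) R i
      rw [(hopt R).1 i]
      linarith
    · intro j hj
      rw [Pi.add_apply, hBapp, hj]
      have hb := hbell_le R j
      rw [hj] at hb
      linarith
  -- continuity of the optimal value
  have hpolne : (Finset.univ.filter (fun π : Fin n → Fin m => IsPolicy s π)).Nonempty :=
    ⟨opt 0, Finset.mem_filter.2 ⟨Finset.mem_univ _, (hopt 0).1⟩⟩
  have hVsup : ∀ (R : Fin m → ℝ) (i : Fin n), valueVec γ F (opt R) R i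
      = (Finset.univ.filter (fun π : Fin n → Fin m => IsPolicy s π)).sup' hpolne
          (fun π => valueVec γ F π R i) := by
    intro R i
    apply le_antisymm
    · exact Finset.le_sup' (fun π => valueVec γ F π R i) (Finset.mem_filter.2 ⟨Finset.mem_univ _, (hopt R).1⟩)
    · exact Finset.sup'_le _ _ fun π hπ => (hopt R).2 π (Finset.mem_filter.1 hπ).2 i
  have hVcont : Continuous (fun R : Fin m → ℝ => valueVec γ F (opt R) R) := by
    apply continuous_pi
    intro i
    have heq : (fun R : Fin m → ℝ => valueVec γ F (opt R) R i)
        = (Finset.univ.filter (fun π : Fin n → Fin m => IsPolicy s π)).sup' hpolne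
            (fun π R => valueVec γ F π R i) := by
      funext R; rw [hVsup R i, Finset.sup'_apply]
    rw [heq]
    apply Continuous.finset_sup' hpolne
    intro π _
    exact (continuous_apply i).comp
      (continuous_const.matrix_mulVec (continuous_const.matrix_mulVec continuous_id))
  refine ⟨{
    toFun := fun R => (⟨R + (γ • F - projMat s) *ᵥ valueVec γ F (opt R) R, hmem R⟩,
      valueVec γ F (opt R) R),
    invFun := fun p => (p.1 : Fin m → ℝ) - (γ • F - projMat s) *ᵥ p.2,
    left_inv := fun R => by simp,
    right_inv := fun p => by
      have hfix : valueVec γ F (opt ((p.1 : Fin m → ℝ) - (γ • F - projMat s) *ᵥ p.2))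
          ((p.1 : Fin m → ℝ) - (γ • F - projMat s) *ᵥ p.2) = p.2 := by
        have h1 : (p.1 : Fin m → ℝ) - (γ • F - projMat s) *ᵥ p.2
            = (p.1 : Fin m → ℝ) + (γ • F - projMat s) *ᵥ (-p.2) := by
          rw [Matrix.mulVec_neg, ← sub_eq_add_neg]
        rw [h1, hshift (p.1 : Fin m → ℝ) (-p.2), hVN _ p.1.2]
        simp
      refine Prod.ext (Subtype.ext ?_) hfix
      simp only [hfix]
      simp,
    continuous_toFun := Continuous.prodMk
      ((continuous_id.add (continuous_const.matrix_mulVec hVcont)).subtype_mk _) hVcont,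
    continuous_invFun := (continuous_subtype_val.comp continuous_fst).sub
      (continuous_const.matrix_mulVec continuous_snd) },
    fun R => ⟨rfl, rfl⟩, fun p => rfl⟩
end
end

section
/- Let σ_u be a permutation of Fin m and σ_x a permutation of Fin n satisfying s(σ_u(j)) = σ_x(s(j)) for all j, with permutation matrices A^u, A^x given by (A^u v)^j = v^{σ_u(j)} and (A^x w)^i = w^{σ_x(i)}, and suppose A^u R = R and A^u F (A^x)^⊤ = F. Then for Δ ∈ ℝ^n, the transformed reward R + BΔ satisfies A^u(R + BΔ) = R + BΔ if and only if A^x Δ = Δ. -/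
open Matrix MeasureTheory Filter Topology

noncomputable section

/-- The permutation matrix acting by `(A v) a = v (σ a)`. -/
def permMat {k : ℕ} (σ : Equiv.Perm (Fin k)) : Matrix (Fin k) (Fin k) ℝ :=
  Matrix.of fun a b => if b = σ a then 1 else 0


lemma permMat_mulVec {k : ℕ} (σ : Equiv.Perm (Fin k)) (v : Fin k → ℝ) (a : Fin k) :
    (permMat σ *ᵥ v) a = v (σ a) := by
  simp [permMat, Matrix.mulVec, dotProduct]

lemma projMat_mulVec {n m : ℕ} (s : Fin m → Fin n) (v : Fin n → ℝ) (j : Fin m) :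
    (projMat s *ᵥ v) j = v (s j) := by
  simp [projMat, Matrix.mulVec, dotProduct]

lemma B_mulVec_injective {n m : ℕ} (s : Fin m → Fin n) (hs : Function.Surjective s)
    (γ : ℝ) (hγ0 : 0 ≤ γ) (hγ1 : γ < 1)
    (F : Matrix (Fin m) (Fin n) ℝ) (hF : RowStochastic F)
    (u : Fin n → ℝ) (hu : (γ • F - projMat s) *ᵥ u = 0) : u = 0 := by
  have key : ∀ j, γ * ∑ i, F j i * u i = u (s j) := by
    intro j
    have := congrFun hu j
    simp only [Matrix.sub_mulVec, Pi.sub_apply, Pi.zero_apply, sub_eq_zero] at this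
    rw [projMat_mulVec] at this
    simpa [Matrix.mulVec, dotProduct, Matrix.smul_apply, Finset.mul_sum,
      mul_assoc] using this
  by_cases hne : n = 0
  · subst hne; funext i; exact absurd i.2 (by omega)
  have : Nonempty (Fin n) := ⟨⟨0, Nat.pos_of_ne_zero hne⟩⟩
  obtain ⟨i₀, -, hi₀⟩ := Finset.exists_max_image Finset.univ (fun i => |u i|)
    Finset.univ_nonempty
  obtain ⟨j₀, hj₀⟩ := hs i₀
  have hbound : |u i₀| ≤ γ * |u i₀| := by
    calc |u i₀| = |γ * ∑ i, F j₀ i * u i| := by rw [key j₀, hj₀]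
    _ = γ * |∑ i, F j₀ i * u i| := by rw [abs_mul, abs_of_nonneg hγ0]
    _ ≤ γ * ∑ i, |F j₀ i * u i| := by
        exact mul_le_mul_of_nonneg_left (Finset.abs_sum_le_sum_abs _ _) hγ0
    _ ≤ γ * ∑ i, F j₀ i * |u i₀| := by
        refine mul_le_mul_of_nonneg_left (Finset.sum_le_sum fun i _ => ?_) hγ0
        rw [abs_mul, abs_of_nonneg (hF.1 j₀ i)]
        exact mul_le_mul_of_nonneg_left (hi₀ i (Finset.mem_univ i)) (hF.1 j₀ i)
    _ = γ * |u i₀| := by rw [← Finset.sum_mul, hF.2 j₀, one_mul]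
  have hzero : |u i₀| = 0 := by nlinarith [abs_nonneg (u i₀)]
  funext i
  have := hi₀ i (Finset.mem_univ i)
  rw [hzero] at this
  exact abs_nonpos_iff.mp this

lemma B_commute {n m : ℕ} (s : Fin m → Fin n)
    (γ : ℝ) (F : Matrix (Fin m) (Fin n) ℝ)
    (σu : Equiv.Perm (Fin m)) (σx : Equiv.Perm (Fin n))
    (hcompat : ∀ j, s (σu j) = σx (s j))
    (hFinv : permMat σu * F * (permMat σx)ᵀ = F)
    (Δ : Fin n → ℝ) :
    permMat σu *ᵥ ((γ • F - projMat s) *ᵥ Δ) =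
      (γ • F - projMat s) *ᵥ (permMat σx *ᵥ Δ) := by
  have hF' : ∀ j i, F (σu j) (σx i) = F j i := by
    intro j i
    have := congrFun (congrFun hFinv j) i
    simp only [Matrix.mul_apply, permMat, Matrix.transpose_apply, Matrix.of_apply] at this
    rw [← this]
    rw [Finset.sum_eq_single (σx i)]
    · rw [Finset.sum_eq_single (σu j)] <;> simp (config := {contextual := true})
    · intro b _ hb
      simp [hb]
    · simp
  funext j
  rw [permMat_mulVec]
  simp only [Matrix.sub_mulVec, Pi.sub_apply]
  congr 1
  · -- γ•F part
    rw [show ((γ • F) *ᵥ Δ) (σu j) = γ * ∑ i, F (σu j) i * Δ i by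
      simp [Matrix.mulVec, dotProduct, Finset.mul_sum, mul_assoc]]
    have hp : permMat σx *ᵥ Δ = fun i => Δ (σx i) := funext (permMat_mulVec σx Δ)
    rw [hp]
    rw [show ((γ • F) *ᵥ fun i => Δ (σx i)) j = γ * ∑ i, F j i * Δ (σx i) by
      simp [Matrix.mulVec, dotProduct, Finset.mul_sum, mul_assoc]]
    congr 1
    rw [← Equiv.sum_comp σx (fun i => F (σu j) i * Δ i)]
    exact Finset.sum_congr rfl fun i _ => by rw [hF' j i]
  · rw [projMat_mulVec, projMat_mulVec, permMat_mulVec, hcompat]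

/-- For a symmetry `(σᵤ, σₓ)` of a `G`-invariant MDP, the transformed reward
`R + BΔ` is invariant iff `Δ` is invariant: `Aᵘ(R + BΔ) = R + BΔ ↔ AˣΔ = Δ`. -/
theorem transformed_reward_invariant_iff {n m : ℕ} (hn : 1 ≤ n) (hm : 1 ≤ m)
    (s : Fin m → Fin n) (hs : Function.Surjective s)
    (γ : ℝ) (hγ0 : 0 ≤ γ) (hγ1 : γ < 1)
    (F : Matrix (Fin m) (Fin n) ℝ) (hF : RowStochastic F)
    (R : Fin m → ℝ)
    (σu : Equiv.Perm (Fin m)) (σx : Equiv.Perm (Fin n))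
    (hcompat : ∀ j, s (σu j) = σx (s j))
    (hRinv : permMat σu *ᵥ R = R)
    (hFinv : permMat σu * F * (permMat σx)ᵀ = F)
    (Δ : Fin n → ℝ) :
    permMat σu *ᵥ (R + (γ • F - projMat s) *ᵥ Δ) = R + (γ • F - projMat s) *ᵥ Δ ↔
      permMat σx *ᵥ Δ = Δ := by
  constructor
  · intro h
    rw [Matrix.mulVec_add, hRinv, B_commute s γ F σu σx hcompat hFinv] at h
    have h2 : (γ • F - projMat s) *ᵥ (permMat σx *ᵥ Δ) = (γ • F - projMat s) *ᵥ Δ :=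
      add_left_cancel h
    have h3 : (γ • F - projMat s) *ᵥ (permMat σx *ᵥ Δ - Δ) = 0 := by
      rw [Matrix.mulVec_sub, h2, sub_self]
    have := B_mulVec_injective s hs γ hγ0 hγ1 F hF _ h3
    exact sub_eq_zero.mp this
  · intro h
    rw [Matrix.mulVec_add, hRinv, B_commute s γ F σu σx hcompat hFinv, h]
end
end

section
/- Let R ∈ ℝ^m with R ≤ 0. If Δ ∈ ℝ^n satisfies R + BΔ ≤ 0, then Δ ≥ V_{π,R} componentwise for every deterministic policy π; in particular Δ ≥ V*_R, i.e. every such Δ is an overestimate of the optimal value vector. -/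
open Matrix MeasureTheory Filter Topology

noncomputable section

/-- If `P` is row-stochastic, `0 ≤ γ < 1`, and `(1 - γ•P) *ᵥ w ≥ 0`, then `w ≥ 0`. -/
lemma nonneg_of_mulVec_nonneg {n : ℕ} (hn : 1 ≤ n) {γ : ℝ} (hγ0 : 0 ≤ γ) (hγ1 : γ < 1)
    {P : Matrix (Fin n) (Fin n) ℝ} (hP0 : ∀ i j, 0 ≤ P i j) (hP1 : ∀ i, ∑ j, P i j = 1)
    {w : Fin n → ℝ} (hw : 0 ≤ ((1 : Matrix (Fin n) (Fin n) ℝ) - γ • P) *ᵥ w) :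
    0 ≤ w := by
  haveI : Nonempty (Fin n) := ⟨⟨0, hn⟩⟩
  obtain ⟨i, hi⟩ := Finset.exists_min_image Finset.univ w ⟨Classical.arbitrary _, Finset.mem_univ _⟩
  have hmin : ∀ j, w i ≤ w j := fun j => hi.2 j (Finset.mem_univ j)
  intro k
  have key : 0 ≤ w i := by
    have h := hw i
    simp only [sub_mulVec, one_mulVec, smul_mulVec, Pi.sub_apply, Pi.smul_apply,
      smul_eq_mul, Pi.zero_apply] at h
    have hPw : γ * w i ≤ γ * (P *ᵥ w) i := by
      apply mul_le_mul_of_nonneg_left _ hγ0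
      calc w i = ∑ j, P i j * w i := by rw [← Finset.sum_mul, hP1, one_mul]
        _ ≤ ∑ j, P i j * w j :=
          Finset.sum_le_sum fun j _ => mul_le_mul_of_nonneg_left (hmin j) (hP0 i j)
        _ = (P *ᵥ w) i := rfl
    nlinarith [hw i, hPw]
  exact le_trans key (hmin k)

lemma rowstoch_polF {n m : ℕ} {F : Matrix (Fin m) (Fin n) ℝ}
    (hF : (∀ j i, 0 ≤ F j i) ∧ ∀ j, ∑ i, F j i = 1) (π : Fin n → Fin m) :
    (∀ i j, 0 ≤ (polMat π * F) i j) ∧ ∀ i, ∑ j, (polMat π * F) i j = 1 := by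
  have hentry : ∀ i j, (polMat π * F) i j = F (π i) j := by
    intro i j
    simp [Matrix.mul_apply, polMat, ite_mul]
  constructor
  · intro i j; rw [hentry]; exact hF.1 _ _
  · intro i; simp only [hentry]; exact hF.2 _

lemma valueVec_le {n m : ℕ} (hn : 1 ≤ n)
    {s : Fin m → Fin n} {γ : ℝ} (hγ0 : 0 ≤ γ) (hγ1 : γ < 1)
    {F : Matrix (Fin m) (Fin n) ℝ} (hF : (∀ j i, 0 ≤ F j i) ∧ ∀ j, ∑ i, F j i = 1)
    {R : Fin m → ℝ} {Δ : Fin n → ℝ}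
    (hΔ : R + (γ • F - projMat s) *ᵥ Δ ≤ 0)
    {π : Fin n → Fin m} (hπ : ∀ i, s (π i) = i) :
    valueVec γ F π R ≤ Δ := by
  set P := polMat π * F with hPdef
  obtain ⟨hP0, hP1⟩ := rowstoch_polF hF π
  set A := (1 : Matrix (Fin n) (Fin n) ℝ) - γ • P with hA
  -- A is invertible: mulVec injective
  have hinj : Function.Injective (A.mulVec) := by
    intro x y hxy
    have h1 : 0 ≤ A *ᵥ (x - y) := by
      rw [Matrix.mulVec_sub, hxy, sub_self]
    have h2 : 0 ≤ A *ᵥ (y - x) := by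
      rw [Matrix.mulVec_sub, hxy, sub_self]
    have g1 := nonneg_of_mulVec_nonneg hn hγ0 hγ1 hP0 hP1 h1
    have g2 := nonneg_of_mulVec_nonneg hn hγ0 hγ1 hP0 hP1 h2
    funext i
    have := g1 i; have := g2 i
    simp only [Pi.sub_apply, Pi.zero_apply] at *
    linarith
  have hunit : IsUnit A := Matrix.mulVec_injective_iff_isUnit.mp hinj
  have hAV : A *ᵥ (valueVec γ F π R) = polMat π *ᵥ R := by
    unfold valueVec
    rw [Matrix.mulVec_mulVec, Matrix.mul_nonsing_inv _ ((Matrix.isUnit_iff_isUnit_det A).mp hunit),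
      Matrix.one_mulVec]
  -- polMat π * projMat s = 1
  have hPS : polMat π * projMat s = 1 := by
    ext i i'
    simp only [Matrix.mul_apply, polMat, projMat, Matrix.of_apply, ite_mul, one_mul, zero_mul]
    rw [Finset.sum_ite_eq' Finset.univ (π i)]
    simp [Matrix.one_apply, hπ i, eq_comm]
  have hkey : 0 ≤ A *ᵥ (Δ - valueVec γ F π R) := by
    rw [Matrix.mulVec_sub, hAV]
    intro i
    have h2 : (polMat π *ᵥ (R + (γ • F - projMat s) *ᵥ Δ)) i ≤ 0 := by
      have : ∀ j, 0 ≤ polMat π i j := by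
        intro j; simp only [polMat, Matrix.of_apply]; positivity
      simp only [Matrix.mulVec, dotProduct]
      apply Finset.sum_nonpos
      intro j _
      exact mul_nonpos_of_nonneg_of_nonpos (this j) (hΔ j)
    rw [Matrix.mulVec_add, Matrix.mulVec_mulVec, Matrix.mul_sub, Matrix.mul_smul, hPS,
      Matrix.sub_mulVec, Matrix.smul_mulVec, Matrix.one_mulVec] at h2
    simp only [Pi.sub_apply, Pi.add_apply, Pi.smul_apply, smul_eq_mul] at h2
    simp only [Pi.sub_apply, Pi.zero_apply]
    have hone : (A *ᵥ Δ) i = Δ i - γ * (P *ᵥ Δ) i := by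
      simp [hA, Matrix.sub_mulVec, Matrix.smul_mulVec, Matrix.one_mulVec]
    have hPΔ : (P *ᵥ Δ) i = ((polMat π * F) *ᵥ Δ) i := rfl
    rw [hone, hPΔ]
    linarith [h2]
  have := nonneg_of_mulVec_nonneg hn hγ0 hγ1 hP0 hP1 hkey
  intro i
  have := this i
  simp only [Pi.sub_apply, Pi.zero_apply] at this
  linarith


/-- For `R ≤ 0`, any `Δ` with `R + BΔ ≤ 0` dominates every value vector
componentwise; in particular `Δ ≥ V*_R`. -/
theorem admissible_overestimates {n m : ℕ} (hn : 1 ≤ n) (hm : 1 ≤ m)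
    (s : Fin m → Fin n) (hs : Function.Surjective s)
    (γ : ℝ) (hγ0 : 0 ≤ γ) (hγ1 : γ < 1)
    (F : Matrix (Fin m) (Fin n) ℝ) (hF : RowStochastic F)
    (R : Fin m → ℝ) (hR : R ≤ 0)
    (πs : Fin n → Fin m) (hπs : IsOptimal s γ F R πs)
    (Δ : Fin n → ℝ) (hΔ : R + (γ • F - projMat s) *ᵥ Δ ≤ 0) :
    (∀ π, IsPolicy s π → valueVec γ F π R ≤ Δ) ∧ valueVec γ F πs R ≤ Δ :=
  ⟨fun _ hπ => valueVec_le hn hγ0 hγ1 hF hΔ hπ, valueVec_le hn hγ0 hγ1 hF hΔ hπs.1⟩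
end
end

section
/- Let R ∈ ℝ^m with R ≤ 0 and let i ∈ Fin n. Then the set {α ∈ ℝ : R + αB ê_i ≤ 0} has a minimum, and this minimum equals max_{j ∈ U_i} R^j / (1 − γF^j_i) (note that 1 − γF^j_i > 0 since γ < 1 and F^j_i ≤ 1). In other words, the i-th component of the safe reward-balancing control law is the least scalar α for which the single-coordinate update R + αB ê_i preserves nonpositivity of the reward. -/
open Matrix MeasureTheory Filter Topology

noncomputable section

/-!
The vector `B êᵢ` has entry `γ F j i - 1 = -(1 - γ F j i) < 0` on `Uᵢ` and `γ F j i ≥ 0` off `Uᵢ`.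
So on `Uᵢ` the constraint `R j + α (B êᵢ) j ≤ 0` reads `R j / (1 - γ F j i) ≤ α`, while off `Uᵢ`
it holds for every `α ≤ 0` because `R ≤ 0`. The largest of the finitely many ratios is `≤ 0`,
hence it is the least feasible `α`.
-/

namespace RowStochastic

variable {n m : ℕ} {F : Matrix (Fin m) (Fin n) ℝ}

theorem le_one (hF : RowStochastic F) (j : Fin m) (i : Fin n) : F j i ≤ 1 :=
  hF.2 j ▸ Finset.single_le_sum (fun k _ => hF.1 j k) (Finset.mem_univ i)

theorem one_sub_mul_pos (hF : RowStochastic F) {γ : ℝ} (hγ1 : γ < 1) (j : Fin m) (i : Fin n) :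
    0 < 1 - γ * F j i := by
  have hF0 := hF.1 j i
  have hF1 := hF.le_one j i
  rcases le_or_gt γ 0 with hγ | hγ <;> nlinarith

end RowStochastic

section SafeRewardBalancing

variable {n m : ℕ} {s : Fin m → Fin n} {γ : ℝ} {F : Matrix (Fin m) (Fin n) ℝ} {R : Fin m → ℝ}
  {i : Fin n} {α : ℝ}

theorem smul_sub_projMat_mulVec_single_one_apply (j : Fin m) :
    ((γ • F - projMat s) *ᵥ Pi.single i 1) j = γ * F j i - if s j = i then 1 else 0 := by
  simp [projMat]

theorem div_le_of_add_smul_balancing_nonpos (hF : RowStochastic F) (hγ1 : γ < 1)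
    (hα : R + α • ((γ • F - projMat s) *ᵥ Pi.single i 1) ≤ 0) {j : Fin m} (hj : s j = i) :
    R j / (1 - γ * F j i) ≤ α := by
  have hαj := hα j
  simp only [Pi.add_apply, Pi.smul_apply, smul_eq_mul, Pi.zero_apply,
    smul_sub_projMat_mulVec_single_one_apply, if_pos hj] at hαj
  rw [div_le_iff₀ (hF.one_sub_mul_pos hγ1 j i)]
  linarith

theorem add_smul_balancing_nonpos (hF : RowStochastic F) (hγ0 : 0 ≤ γ) (hγ1 : γ < 1)
    (hR : R ≤ 0) (hα0 : α ≤ 0) (hα : ∀ j, s j = i → R j / (1 - γ * F j i) ≤ α) :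
    R + α • ((γ • F - projMat s) *ᵥ Pi.single i 1) ≤ 0 := by
  intro j
  simp only [Pi.add_apply, Pi.smul_apply, smul_eq_mul, Pi.zero_apply,
    smul_sub_projMat_mulVec_single_one_apply]
  by_cases hj : s j = i
  · have := (div_le_iff₀ (hF.one_sub_mul_pos hγ1 j i)).mp (hα j hj)
    rw [if_pos hj]
    linarith
  · have : α * (γ * F j i) ≤ 0 := mul_nonpos_of_nonpos_of_nonneg hα0 (mul_nonneg hγ0 (hF.1 j i))
    rw [if_neg hj, sub_zero]
    linarith [show R j ≤ 0 from hR j]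

end SafeRewardBalancing

theorem safe_reward_balancing_component_general {n m : ℕ}
    (s : Fin m → Fin n) (hs : Function.Surjective s)
    (γ : ℝ) (hγ0 : 0 ≤ γ) (hγ1 : γ < 1)
    (F : Matrix (Fin m) (Fin n) ℝ) (hF : RowStochastic F)
    (R : Fin m → ℝ) (hR : R ≤ 0) (i : Fin n) :
    IsLeast {α : ℝ | R + α • ((γ • F - projMat s) *ᵥ Pi.single i 1) ≤ 0}
      (sSup {x : ℝ | ∃ j, s j = i ∧ R j / (1 - γ * F j i) = x}) := by
  set T := {x : ℝ | ∃ j, s j = i ∧ R j / (1 - γ * F j i) = x}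
  have hT_fin : T.Finite :=
    (Set.finite_range fun j => R j / (1 - γ * F j i)).subset fun _ ⟨j, _, hx⟩ => ⟨j, hx⟩
  have hT_ne : T.Nonempty := let ⟨j, hj⟩ := hs i; ⟨_, j, hj, rfl⟩
  have hsup_nonpos : sSup T ≤ 0 := by
    obtain ⟨j, -, hj⟩ := hT_ne.csSup_mem hT_fin
    exact hj ▸ div_nonpos_of_nonpos_of_nonneg (hR j) (hF.one_sub_mul_pos hγ1 j i).le
  refine ⟨add_smul_balancing_nonpos hF hγ0 hγ1 hR hsup_nonpos
    fun j hj => le_csSup hT_fin.bddAbove ⟨j, hj, rfl⟩, fun α hα => csSup_le hT_ne ?_⟩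
  rintro _ ⟨j, hj, rfl⟩
  exact div_le_of_add_smul_balancing_nonpos hF hγ1 hα hj

/-- For `R ≤ 0` and a state `i`, the set of scalars `α` for which the
single-coordinate update `R + α B êᵢ` stays nonpositive has a minimum, equal to
`max_{j ∈ U_i} R j / (1 − γ F j i)`: the `i`-th component of safe reward-balancing. -/
theorem safe_reward_balancing_component {n m : ℕ} (hn : 1 ≤ n) (hm : 1 ≤ m)
    (s : Fin m → Fin n) (hs : Function.Surjective s)
    (γ : ℝ) (hγ0 : 0 ≤ γ) (hγ1 : γ < 1)
    (F : Matrix (Fin m) (Fin n) ℝ) (hF : RowStochastic F)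
    (R : Fin m → ℝ) (hR : R ≤ 0) (i : Fin n) :
    IsLeast {α : ℝ | R + α • ((γ • F - projMat s) *ᵥ Pi.single i 1) ≤ 0}
      (sSup {x : ℝ | ∃ j, s j = i ∧ R j / (1 - γ * F j i) = x}) :=
  safe_reward_balancing_component_general s hs γ hγ0 hγ1 F hF R hR i
end
end

section
/- Let F and F̂ be two row-stochastic matrices in ℝ^{m×n}, let R ∈ ℝ^m, Δ ∈ ℝ^n, and define the perturbed reward R̂ := R + (γF̂ − S)Δ. Then, with all value vectors computed with respect to the true model F, for every deterministic policy π: V_{π,R̂} = V_{π,R} − Δ + γ (I_n − γΠF)⁻¹ Π(F̂ − F) Δ. -/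
open Matrix MeasureTheory Filter Topology

noncomputable section

lemma aux_det_isUnit {n : ℕ} (γ : ℝ) (hγ0 : 0 ≤ γ) (hγ1 : γ < 1)
    (P : Matrix (Fin n) (Fin n) ℝ)
    (hP0 : ∀ i j, 0 ≤ P i j) (hP1 : ∀ i, ∑ j, P i j = 1) :
    IsUnit ((1 : Matrix (Fin n) (Fin n) ℝ) - γ • P).det := by
  rw [isUnit_iff_ne_zero]
  apply det_ne_zero_of_sum_row_lt_diag
  intro k
  have hPk1 : P k k ≤ 1 := by
    calc P k k ≤ ∑ j, P k j :=
          Finset.single_le_sum (fun j _ => hP0 k j) (Finset.mem_univ k)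
      _ = 1 := hP1 k
  have h1 : ∑ j ∈ Finset.univ.erase k, ‖((1 : Matrix (Fin n) (Fin n) ℝ) - γ • P) k j‖
      = γ * (1 - P k k) := by
    have : ∀ j ∈ Finset.univ.erase k,
        ‖((1 : Matrix (Fin n) (Fin n) ℝ) - γ • P) k j‖ = γ * P k j := by
      intro j hj
      have hjk : j ≠ k := Finset.ne_of_mem_erase hj
      simp only [Matrix.sub_apply, Matrix.smul_apply, Matrix.one_apply, Ne.symm hjk,
        if_false, smul_eq_mul, zero_sub, Real.norm_eq_abs, abs_neg]
      exact abs_of_nonneg (mul_nonneg hγ0 (hP0 k j))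
    rw [Finset.sum_congr rfl this, ← Finset.mul_sum,
      Finset.sum_erase_eq_sub (Finset.mem_univ k), hP1 k]
  have h2 : ‖((1 : Matrix (Fin n) (Fin n) ℝ) - γ • P) k k‖ = 1 - γ * P k k := by
    have : γ * P k k ≤ 1 := by nlinarith [hP0 k k]
    simp [Matrix.sub_apply, Matrix.smul_apply, Matrix.one_apply, Real.norm_eq_abs,
      abs_of_nonneg, this]
  rw [h1, h2]
  nlinarith [hP0 k k]

/-- Effect of an approximate-model reward update on the true value vectors:
if `R̂ = R + (γF̂ − S)Δ` then `V_{π,R̂} = V_{π,R} − Δ + γ(I − γΠF)⁻¹Π(F̂ − F)Δ`. -/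
theorem approximate_model_update {n m : ℕ} (hn : 1 ≤ n) (hm : 1 ≤ m)
    (s : Fin m → Fin n) (hs : Function.Surjective s)
    (γ : ℝ) (hγ0 : 0 ≤ γ) (hγ1 : γ < 1)
    (F Fhat : Matrix (Fin m) (Fin n) ℝ)
    (hF : RowStochastic F) (hFhat : RowStochastic Fhat)
    (R : Fin m → ℝ) (Δ : Fin n → ℝ)
    (π : Fin n → Fin m) (hπ : IsPolicy s π) :
    valueVec γ F π (R + (γ • Fhat - projMat s) *ᵥ Δ) =
      valueVec γ F π R - Δ +
        γ • (((1 : Matrix (Fin n) (Fin n) ℝ) - γ • (polMat π * F))⁻¹ *ᵥ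
          ((polMat π * (Fhat - F)) *ᵥ Δ)) := by
  obtain ⟨hF0, hF1⟩ := hF
  have hPF : ∀ M : Matrix (Fin m) (Fin n) ℝ, polMat π * M = M.submatrix π id := by
    intro M; ext i k; simp [polMat, Matrix.mul_apply, ite_mul]
  have hdet : IsUnit ((1 : Matrix (Fin n) (Fin n) ℝ) - γ • (polMat π * F)).det := by
    apply aux_det_isUnit γ hγ0 hγ1
    · intro i j; rw [hPF]; exact hF0 (π i) j
    · intro i; rw [hPF]; exact hF1 (π i)
  have hPS : polMat π * projMat s = 1 := by
    ext i k
    simp only [polMat, projMat, Matrix.mul_apply, Matrix.of_apply, Matrix.one_apply,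
      mul_ite, mul_one, mul_zero, ite_mul, one_mul, zero_mul]
    rw [Finset.sum_eq_single (π i)]
    · simp [hπ i, eq_comm]
    · intro x _ hx; simp [hx]
    · simp
  have key : polMat π * (γ • Fhat - projMat s)
      = γ • (polMat π * (Fhat - F))
        - ((1 : Matrix (Fin n) (Fin n) ℝ) - γ • (polMat π * F)) := by
    rw [Matrix.mul_sub, hPS, Matrix.mul_sub, Matrix.mul_smul, smul_sub]
    abel
  unfold valueVec
  rw [Matrix.mulVec_add, Matrix.mulVec_mulVec, key, Matrix.sub_mulVec,
    Matrix.smul_mulVec, Matrix.mulVec_add, Matrix.mulVec_sub, Matrix.mulVec_smul]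
  have hc : ((1 : Matrix (Fin n) (Fin n) ℝ) - γ • (polMat π * F))⁻¹ *ᵥ
      (((1 : Matrix (Fin n) (Fin n) ℝ) - γ • (polMat π * F)) *ᵥ Δ) = Δ := by
    rw [Matrix.mulVec_mulVec, Matrix.nonsing_inv_mul _ hdet, Matrix.one_mulVec]
  rw [hc]
  abel
end
end

section
/- Let R ∈ ℝ^m with R ≤ 0. Then: (a) I(R) equals the intersection, over all row-stochastic matrices F̂ ∈ ℝ^{m×n}, of the sets {Δ ∈ ℝ^n : Δ ≤ 0 and R + (γF̂ − S)Δ ≤ 0}; in particular every Δ ∈ I(R) preserves nonpositivity of the reward under the update R ↦ R + (γF̂ − S)Δ for every model F̂, and I(R) is the largest set with this model-independence property. (b) h_max(R) ∈ I(R). -/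
open Matrix MeasureTheory Filter Topology

noncomputable section

/-- The model-invariant admissible set `I(R)`. -/
def Iset {n m : ℕ} (s : Fin m → Fin n) (γ : ℝ) (R : Fin m → ℝ) : Set (Fin n → ℝ) :=
  {Δ | Δ ≤ 0 ∧ ∀ i k : Fin n, ∀ j : Fin m, s j = i → γ * Δ k + R j ≤ Δ i}

/-- (a) `I(R)` is exactly the intersection over all row-stochastic models
`F̂` of the admissible sets `{Δ : Δ ≤ 0 ∧ R + (γF̂ − S)Δ ≤ 0}` — hence the largest
model-independent admissible set. (b) `h_max(R) ∈ I(R)`. -/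
theorem largest_model_invariant_admissible_set {n m : ℕ} (hn : 1 ≤ n) (hm : 1 ≤ m)
    (s : Fin m → Fin n) (hs : Function.Surjective s)
    (γ : ℝ) (hγ0 : 0 ≤ γ) (hγ1 : γ < 1)
    (R : Fin m → ℝ) (hR : R ≤ 0) :
    (Iset s γ R =
        ⋂ Fhat ∈ {F : Matrix (Fin m) (Fin n) ℝ | RowStochastic F},
          {Δ : Fin n → ℝ | Δ ≤ 0 ∧ R + (γ • Fhat - projMat s) *ᵥ Δ ≤ 0}) ∧
      hmax s R ∈ Iset s γ R := by

  constructor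
  · ext Δ
    simp only [Set.mem_iInter, Set.mem_setOf_eq, Iset]
    constructor
    · rintro ⟨hΔ0, hΔ⟩ F hF
      refine ⟨hΔ0, ?_⟩
      intro j
      have hproj : (projMat s *ᵥ Δ) j = Δ (s j) := by
        simp [projMat, mulVec, dotProduct]
      have key : γ * (F *ᵥ Δ) j + R j = ∑ k, F j k * (γ * Δ k + R j) := by
        simp only [mulVec, dotProduct, mul_add]
        rw [Finset.mul_sum, Finset.sum_add_distrib, ← Finset.sum_mul, hF.2, one_mul]
        congr 1
        exact Finset.sum_congr rfl fun k _ => by ring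
      have hle : ∑ k, F j k * (γ * Δ k + R j) ≤ Δ (s j) := by
        calc ∑ k, F j k * (γ * Δ k + R j) ≤ ∑ k, F j k * Δ (s j) :=
              Finset.sum_le_sum fun k _ =>
                mul_le_mul_of_nonneg_left (hΔ (s j) k j rfl) (hF.1 j k)
          _ = Δ (s j) := by rw [← Finset.sum_mul, hF.2, one_mul]
      have h1 : γ * (F *ᵥ Δ) j + R j ≤ Δ (s j) := key ▸ hle
      simp only [Pi.add_apply, Pi.zero_apply, sub_mulVec, smul_mulVec,
        Pi.sub_apply, Pi.smul_apply, smul_eq_mul, hproj]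
      linarith
    · intro h
      have h0 := h (projMat s) ⟨fun j i => by simp [projMat]; positivity,
        fun j => by simp [projMat]⟩
      refine ⟨h0.1, ?_⟩
      intro i k j hji
      have hFk : RowStochastic (Matrix.of fun (j : Fin m) (i : Fin n) =>
          if i = k then (1:ℝ) else 0) := by
        constructor
        · intro j i; dsimp; positivity
        · intro j; simp
      have h2 := (h _ hFk).2 j
      have hproj : (projMat s *ᵥ Δ) j = Δ (s j) := by
        simp [projMat, mulVec, dotProduct]
      have hFkv : ((Matrix.of fun (j : Fin m) (i : Fin n) =>
          if i = k then (1:ℝ) else 0) *ᵥ Δ) j = Δ k := by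
        simp [mulVec, dotProduct]
      simp only [Pi.add_apply, Pi.zero_apply, sub_mulVec, smul_mulVec,
        Pi.sub_apply, Pi.smul_apply, smul_eq_mul, hproj, hFkv] at h2
      subst hji
      linarith
  · have hne : ∀ i, {x | ∃ j, s j = i ∧ R j = x}.Nonempty := by
      intro i
      obtain ⟨j, hj⟩ := hs i
      exact ⟨R j, j, hj, rfl⟩
    have hbdd : ∀ i, BddAbove {x | ∃ j, s j = i ∧ R j = x} := by
      intro i
      refine (Set.Finite.subset (Set.finite_range R) ?_).bddAbove
      rintro x ⟨j, -, rfl⟩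
      exact ⟨j, rfl⟩
    have hnonpos : ∀ i, hmax s R i ≤ 0 := by
      intro i
      refine csSup_le (hne i) ?_
      rintro x ⟨j, -, rfl⟩
      exact hR j
    refine ⟨hnonpos, ?_⟩
    intro i k j hji
    have h1 : R j ≤ hmax s R i := le_csSup (hbdd i) ⟨j, hji, rfl⟩
    have h2 : γ * hmax s R k ≤ 0 := mul_nonpos_of_nonneg_of_nonpos hγ0 (hnonpos k)
    linarith
end
end

section
/- Let α ∈ [0,1) and let h : ℝ^m → ℝ^n satisfy the robust-normalization conditions with constant α. Then for every sequence (F̂_t)_{t∈ℕ} of row-stochastic matrices in ℝ^{m×n} and every initial reward R̂_0 ≤ 0, the iteration R̂_{t+1} := R̂_t + (γF̂_t − S) h(R̂_t) satisfies R̂_t ≤ 0 for all t and ‖h_max(R̂_{t+1})‖_∞ ≤ α ‖h_max(R̂_t)‖_∞ for all t; consequently ‖h_max(R̂_t)‖_∞ ≤ α^t ‖h_max(R̂_0)‖_∞ → 0, i.e. R̂_t converges geometrically to the normal set regardless of the model realizations. -/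
open Matrix MeasureTheory Filter Topology

noncomputable section

/-- The robust-normalization conditions with constant `α`:
(i) `h(R) ∈ I(R)` and (ii) `h(R)^i + γ‖h(R)‖_∞ ≤ h_max(R)^i + α‖h_max(R)‖_∞`. -/
def RobustNormalizing {n m : ℕ} (s : Fin m → Fin n) (γ α : ℝ)
    (h : (Fin m → ℝ) → (Fin n → ℝ)) : Prop :=
  ∀ R : Fin m → ℝ, R ≤ 0 →
    h R ∈ Iset s γ R ∧ ∀ i, h R i + γ * ‖h R‖ ≤ hmax s R i + α * ‖hmax s R‖

section Aux

variable {n m : ℕ} {s : Fin m → Fin n}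

lemma fiber_nonempty (hs : Function.Surjective s) (i : Fin n) :
    (Finset.univ.filter (fun j => s j = i)).Nonempty := by
  obtain ⟨j, hj⟩ := hs i
  exact ⟨j, by simp [hj]⟩

lemma hmax_eq (hs : Function.Surjective s) (R : Fin m → ℝ) (i : Fin n) :
    hmax s R i = (Finset.univ.filter (fun j => s j = i)).sup' (fiber_nonempty hs i) R := by
  rw [Finset.sup'_eq_csSup_image]
  refine congrArg sSup ?_
  ext x
  constructor
  · rintro ⟨j, hj, rfl⟩; exact ⟨j, by simp [hj], rfl⟩
  · rintro ⟨j, hj, rfl⟩; exact ⟨j, by simpa using hj, rfl⟩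

lemma le_hmax (hs : Function.Surjective s) (R : Fin m → ℝ) (j : Fin m) :
    R j ≤ hmax s R (s j) := by
  rw [hmax_eq hs]
  exact Finset.le_sup' _ (by simp)

lemma hmax_le (hs : Function.Surjective s) {R : Fin m → ℝ} {c : ℝ} {i : Fin n}
    (H : ∀ j, s j = i → R j ≤ c) : hmax s R i ≤ c := by
  rw [hmax_eq hs]
  exact Finset.sup'_le _ _ fun j hj => H j (by simpa using hj)

lemma exists_hmax (hs : Function.Surjective s) (R : Fin m → ℝ) (i : Fin n) :
    ∃ j, s j = i ∧ hmax s R i = R j := by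
  obtain ⟨j, hj, hv⟩ := Finset.exists_mem_eq_sup'
    (fiber_nonempty hs i) R
  exact ⟨j, by simpa using hj, by rw [hmax_eq hs]; exact hv⟩

lemma mulVec_key (γ : ℝ) (F : Matrix (Fin m) (Fin n) ℝ) (v : Fin n → ℝ) (j : Fin m) :
    ((γ • F - projMat s) *ᵥ v) j = γ * ∑ k, F j k * v k - v (s j) := by
  simp only [Matrix.mulVec, dotProduct, Matrix.sub_apply, Matrix.smul_apply,
    projMat, Matrix.of_apply, sub_mul, Finset.sum_sub_distrib, smul_eq_mul, ite_mul,
    one_mul, zero_mul, Finset.sum_ite_eq, Finset.mem_univ, if_true, Finset.mul_sum,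
    mul_assoc]

lemma step_key (hn : 1 ≤ n)
    (hs : Function.Surjective s)
    {γ : ℝ} (hγ0 : 0 ≤ γ)
    {α : ℝ} (hα0 : 0 ≤ α)
    {h : (Fin m → ℝ) → (Fin n → ℝ)} (hrob : RobustNormalizing s γ α h)
    {F : Matrix (Fin m) (Fin n) ℝ} (hF : RowStochastic F)
    {R : Fin m → ℝ} (hR : R ≤ 0) :
    (R + (γ • F - projMat s) *ᵥ h R ≤ 0) ∧
      ‖hmax s (R + (γ • F - projMat s) *ᵥ h R)‖ ≤ α * ‖hmax s R‖ := by
  obtain ⟨⟨hR1, hR2⟩, hR3⟩ := hrob R hR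
  set v := h R with hv
  set R' := R + (γ • F - projMat s) *ᵥ v with hR'
  have hR'j : ∀ j, R' j = R j + (γ * ∑ k, F j k * v k - v (s j)) := by
    intro j; rw [hR']; simp [mulVec_key]
  -- per-row bound: γ * ∑ k, F j k * v k ≤ v (s j) - R j
  have hupper : ∀ j, γ * ∑ k, F j k * v k ≤ v (s j) - R j := by
    intro j
    have hc : γ * ∑ k, F j k * v k = ∑ k, F j k * (γ * v k) := by
      rw [Finset.mul_sum]; exact Finset.sum_congr rfl fun k _ => by ring
    rw [hc]
    calc ∑ k, F j k * (γ * v k) ≤ ∑ k, F j k * (v (s j) - R j) := by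
          refine Finset.sum_le_sum fun k _ => mul_le_mul_of_nonneg_left ?_ (hF.1 j k)
          have := hR2 (s j) k j rfl
          linarith
      _ = v (s j) - R j := by rw [← Finset.sum_mul, hF.2 j, one_mul]
  have hR'le : R' ≤ 0 := by
    intro j
    have := hupper j
    have := hR'j j
    simp only [Pi.zero_apply]
    linarith
  refine ⟨hR'le, ?_⟩
  -- lower bound on ∑ k, F j k * v k
  have hlow : ∀ j, -‖v‖ ≤ ∑ k, F j k * v k := by
    intro j
    calc -‖v‖ = ∑ k, F j k * (-‖v‖) := by rw [← Finset.sum_mul, hF.2 j, one_mul]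
      _ ≤ ∑ k, F j k * v k := by
          refine Finset.sum_le_sum fun k _ => mul_le_mul_of_nonneg_left ?_ (hF.1 j k)
          have h1 : |v k| ≤ ‖v‖ := by
            simpa [Real.norm_eq_abs] using norm_le_pi_norm v k
          have := neg_abs_le (v k)
          linarith
  have hαnorm : 0 ≤ α * ‖hmax s R‖ := mul_nonneg hα0 (norm_nonneg _)
  rw [pi_norm_le_iff_of_nonneg hαnorm]
  intro i
  rw [Real.norm_eq_abs, abs_le]
  constructor
  · -- -α‖hmax R‖ ≤ hmax R' i
    obtain ⟨j, hji, hjv⟩ := exists_hmax hs R i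
    have hle : v i + γ * ‖v‖ - hmax s R i ≤ α * ‖hmax s R‖ := by
      have := hR3 i; linarith
    have h1 : R' j ≤ hmax s R' i := by
      have := le_hmax hs R' j; rwa [hji] at this
    have h2 : hmax s R i - γ * ‖v‖ - v i ≤ R' j := by
      rw [hR'j j, hji, ← hjv]
      have h3 := hlow j
      nlinarith
    linarith
  · -- hmax R' i ≤ α‖hmax R‖
    have : hmax s R' i ≤ 0 := hmax_le hs fun j _ => hR'le j
    linarith

end Aux

/-- Under the robust-normalization conditions, the stochastic iteration
`R̂_{t+1} = R̂_t + (γF̂_t − S)h(R̂_t)` keeps the reward nonpositive and contracts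
`‖h_max(R̂_t)‖_∞` by the factor `α` at each step, hence converges geometrically to the
normal set, regardless of the model realizations. -/
theorem robust_normalization {n m : ℕ} (hn : 1 ≤ n) (hm : 1 ≤ m)
    (s : Fin m → Fin n) (hs : Function.Surjective s)
    (γ : ℝ) (hγ0 : 0 ≤ γ) (hγ1 : γ < 1)
    (α : ℝ) (hα0 : 0 ≤ α) (hα1 : α < 1)
    (h : (Fin m → ℝ) → (Fin n → ℝ)) (hrob : RobustNormalizing s γ α h)
    (Fhat : ℕ → Matrix (Fin m) (Fin n) ℝ) (hFhat : ∀ t, RowStochastic (Fhat t))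
    (Rhat : ℕ → Fin m → ℝ) (hR0 : Rhat 0 ≤ 0)
    (hstep : ∀ t, Rhat (t + 1) = Rhat t + (γ • Fhat t - projMat s) *ᵥ h (Rhat t)) :
    (∀ t, Rhat t ≤ 0) ∧
      (∀ t, ‖hmax s (Rhat (t + 1))‖ ≤ α * ‖hmax s (Rhat t)‖) ∧
      (∀ t, ‖hmax s (Rhat t)‖ ≤ α ^ t * ‖hmax s (Rhat 0)‖) ∧
      Tendsto (fun t => ‖hmax s (Rhat t)‖) atTop (𝓝 0) := by
  have hle : ∀ t, Rhat t ≤ 0 := by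
    intro t
    induction t with
    | zero => exact hR0
    | succ t ih =>
        rw [hstep t]
        exact (step_key hn hs hγ0 hα0 hrob (hFhat t) ih).1
  have hcontr : ∀ t, ‖hmax s (Rhat (t + 1))‖ ≤ α * ‖hmax s (Rhat t)‖ := by
    intro t
    rw [hstep t]
    exact (step_key hn hs hγ0 hα0 hrob (hFhat t) (hle t)).2
  have hgeo : ∀ t, ‖hmax s (Rhat t)‖ ≤ α ^ t * ‖hmax s (Rhat 0)‖ := by
    intro t
    induction t with
    | zero => simp
    | succ t ih =>
        calc ‖hmax s (Rhat (t + 1))‖ ≤ α * ‖hmax s (Rhat t)‖ := hcontr t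
          _ ≤ α * (α ^ t * ‖hmax s (Rhat 0)‖) :=
              mul_le_mul_of_nonneg_left ih hα0
          _ = α ^ (t + 1) * ‖hmax s (Rhat 0)‖ := by ring
  refine ⟨hle, hcontr, hgeo, ?_⟩
  refine squeeze_zero (fun t => norm_nonneg _) hgeo ?_
  have := (tendsto_pow_atTop_nhds_zero_of_lt_one hα0 hα1).mul_const ‖hmax s (Rhat 0)‖
  simpa using this
end
end
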